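/- Let 1 ≤ N ≤ M be integers. Then: (i) for every bounded f : [-1,1] → ℂ there is a unique minimizer F_{N,M}(f) ∈ 𝒢_N of Σ_{|n|≤M} |f(x_n) − φ(x_n)|² over φ ∈ 𝒢_N (in particular, the only element of 𝒢_N vanishing at all 2M+1 equispaced nodes is 0); (ii) with D(N,M) := sup{ ‖φ‖ : φ ∈ 𝒢_N, ‖φ‖_M = 1 }, every bounded f satisfies ‖f − F_{N,M}(f)‖ ≤ √2 (1 + D(N,M)) · inf_{φ ∈ 𝒢_N} ‖f − φ‖_∞; and (iii) the condition number of the exact equispaced Fourier extension equals D(N,M), i.e. sup{ ‖F_{N,M}(f)‖ : f bounded on [-1,1], ‖f‖_M = 1 } = D(N,M). -/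

import Mathlib

open MeasureTheory

/-- The Fourier extension frame functions `φ_n(x) = (2T)^{-1/2} exp(i n π x / T)`. -/
noncomputable def phiFE (T : ℝ) (n : ℤ) (x : ℝ) : ℂ :=
  ((1 / Real.sqrt (2 * T) : ℝ) : ℂ) *
    Complex.exp (Complex.I * (n : ℂ) * (Real.pi : ℂ) * (x : ℂ) / (T : ℂ))

/-- Membership of `φ` in `𝒢_N = span{φ_n : |n| ≤ N}`. -/
def memGN (T : ℝ) (N : ℕ) (φ : ℝ → ℂ) : Prop :=
  ∃ c : Fin (2 * N + 1) → ℂ, φ = fun x => ∑ i, c i * phiFE T (((i : ℕ) : ℤ) - (N : ℤ)) x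

/-- The equispaced node `x_n = n/M`, indexed by `k ∈ {0,…,2M}` with `n = k - M`. -/
noncomputable def equiNode (M : ℕ) (k : Fin (2 * M + 1)) : ℝ :=
  (((k : ℕ) : ℝ) - (M : ℝ)) / (M : ℝ)

/-- The discrete seminorm `‖g‖_M² = (M+1/2)⁻¹ Σ_{|n|≤M} |g(n/M)|²`. -/
noncomputable def equiNormSq (M : ℕ) (g : ℝ → ℂ) : ℝ :=
  ((M : ℝ) + 1 / 2)⁻¹ * ∑ k : Fin (2 * M + 1), ‖g (equiNode M k)‖ ^ 2

/-- `g` is bounded on `[-1,1]`. -/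
def BddOn11 (g : ℝ → ℂ) : Prop := ∃ B : ℝ, ∀ x ∈ Set.Icc (-1 : ℝ) 1, ‖g x‖ ≤ B

/-- `φ` is the equispaced Fourier extension `F_{N,M}(f)`: the minimizer in `𝒢_N` of the
discrete least squares. -/
def IsEquiFE (T : ℝ) (N M : ℕ) (f φ : ℝ → ℂ) : Prop :=
  memGN T N φ ∧ ∀ ψ : ℝ → ℂ, memGN T N ψ →
    (∑ k : Fin (2 * M + 1), ‖f (equiNode M k) - φ (equiNode M k)‖ ^ 2)
      ≤ ∑ k : Fin (2 * M + 1), ‖f (equiNode M k) - ψ (equiNode M k)‖ ^ 2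

/-!
The node evaluation map is injective on `𝒢_N`: at `x_k = k/M` an element of `𝒢_N` is, up to a
nonvanishing factor, a polynomial of degree `2N < 2M + 1` in `w_k = exp(iπx_k/T)`, and the `w_k` are
distinct because `|πx_k/T| ≤ π/T < π`. Hence the discrete least-squares problem is the orthogonal
projection of the node values onto the image of `𝒢_N`, which exists and has a unique preimage.

Since the projection is a contraction, `‖φ - F(f)‖_M ≤ ‖φ - f‖_M ≤ √2 ‖f - φ‖_∞` for `φ ∈ 𝒢_N`, and
`‖·‖ ≤ D ‖·‖_M` on `𝒢_N`; the triangle inequality gives (ii). The same contraction gives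
`‖F(f)‖ ≤ D ‖f‖_M`, and equality in (iii) comes from `F(φ) = φ` on `𝒢_N`.
-/

open Set
open scoped Real

noncomputable def frame (T : ℝ) (N : ℕ) (i : Fin (2 * N + 1)) : ℝ → ℂ := phiFE T ((i : ℕ) - N)

def fourierSpace (T : ℝ) (N : ℕ) : Submodule ℂ (ℝ → ℂ) := Submodule.span ℂ (range (frame T N))

theorem memGN_iff_mem_fourierSpace {T : ℝ} {N : ℕ} {φ : ℝ → ℂ} :
    memGN T N φ ↔ φ ∈ fourierSpace T N := by
  simp only [memGN, fourierSpace, Submodule.mem_span_range_iff_exists_fun, funext_iff,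
    Finset.sum_apply, Pi.smul_apply, smul_eq_mul, frame, eq_comm]

theorem continuous_phiFE (T : ℝ) (n : ℤ) : Continuous (phiFE T n) := by
  unfold phiFE
  fun_prop

theorem continuous_of_mem_fourierSpace {T : ℝ} {N : ℕ} {φ : ℝ → ℂ}
    (hφ : φ ∈ fourierSpace T N) : Continuous φ := by
  induction hφ using Submodule.span_induction with
  | mem _ h => obtain ⟨i, rfl⟩ := h; exact continuous_phiFE T _
  | zero => exact continuous_const
  | add _ _ _ _ hφ hψ => exact hφ.add hψ
  | smul c _ _ hφ => exact hφ.const_smul c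

theorem phiFE_eq_zpow (T : ℝ) (n : ℤ) (x : ℝ) :
    phiFE T n x = ((1 / √(2 * T) : ℝ) : ℂ) * (Circle.exp (π * x / T) : ℂ) ^ n := by
  rw [phiFE, Circle.coe_exp, ← Complex.exp_int_mul]
  push_cast
  ring_nf

theorem norm_phiFE (T : ℝ) (n : ℤ) (x : ℝ) : ‖phiFE T n x‖ = 1 / √(2 * T) := by
  rw [phiFE_eq_zpow, norm_mul, norm_zpow, Circle.norm_coe, one_zpow, mul_one, Complex.norm_real,
    Real.norm_of_nonneg (by positivity)]

theorem sum_mul_phiFE (T : ℝ) (N : ℕ) (c : Fin (2 * N + 1) → ℂ) (x : ℝ) :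
    ∑ i, c i * phiFE T ((i : ℕ) - N) x = ((1 / √(2 * T) : ℝ) : ℂ) *
      ((Circle.exp (π * x / T) : ℂ) ^ N)⁻¹ * ∑ i, c i * (Circle.exp (π * x / T) : ℂ) ^ (i : ℕ) := by
  simp only [phiFE_eq_zpow, zpow_sub₀ (Circle.coe_ne_zero _), zpow_natCast, Finset.mul_sum]
  refine Finset.sum_congr rfl fun i _ => ?_
  rw [div_eq_mul_inv]
  ring

theorem equiNode_mem_Icc (M : ℕ) (k : Fin (2 * M + 1)) : equiNode M k ∈ Icc (-1 : ℝ) 1 := by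
  have hk : ((k : ℕ) : ℝ) ≤ 2 * M := by exact_mod_cast Nat.lt_succ_iff.mp k.2
  rw [mem_Icc, ← abs_le, equiNode, abs_div, Nat.abs_cast]
  exact div_le_one_of_le₀ (abs_le.mpr ⟨by linarith [(k : ℕ).cast_nonneg (α := ℝ)], by linarith⟩)
    M.cast_nonneg

theorem equiNode_injective (M : ℕ) : Function.Injective (equiNode M) := by
  rcases eq_or_ne M 0 with rfl | hM
  · exact fun k k' _ => Fin.ext (by omega)
  intro k k' h
  rw [equiNode, equiNode, div_left_inj' (Nat.cast_ne_zero.mpr hM), sub_left_inj,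
    Nat.cast_inj] at h
  exact Fin.ext h

theorem injective_circleExp_equiNode {T : ℝ} (hT : 1 < T) (M : ℕ) :
    Function.Injective fun k => (Circle.exp (π * equiNode M k / T) : ℂ) := by
  have hT0 : 0 < T := by linarith
  have hmem : ∀ k, π * equiNode M k / T ∈ Icc (-(π / T)) (π / T) := fun k => by
    obtain ⟨h1, h2⟩ := equiNode_mem_Icc M k
    rw [← neg_div, mem_Icc]
    constructor <;> gcongr <;> nlinarith [Real.pi_pos]
  have hwidth : π / T - -(π / T) < 2 * π := by
    rw [sub_neg_eq_add, ← two_mul, div_eq_mul_one_div π T]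
    nlinarith [Real.pi_pos, (div_lt_one hT0).mpr hT]
  intro k k' h
  refine equiNode_injective M ?_
  have := Circle.exp_injOn_Icc hwidth (hmem k) (hmem k') (Circle.coe_injective h)
  field_simp at this
  simpa [Real.pi_ne_zero] using this

theorem eq_zero_of_forall_equiNode_eq_zero {T : ℝ} (hT : 1 < T) {N M : ℕ} (hNM : N ≤ M)
    {φ : ℝ → ℂ} (hφ : φ ∈ fourierSpace T N) (h0 : ∀ k, φ (equiNode M k) = 0) : φ = 0 := by
  obtain ⟨c, rfl⟩ := memGN_iff_mem_fourierSpace.mpr hφ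
  have hscale : (0 : ℝ) < 1 / √(2 * T) := by
    have : 0 < T := by linarith
    positivity
  have hle : 2 * N + 1 ≤ 2 * M + 1 := by omega
  have hc : c = 0 := by
    refine Matrix.eq_zero_of_forall_index_sum_mul_pow_eq_zero
      ((injective_circleExp_equiNode hT M).comp (Fin.castLE_injective hle)) fun j => ?_
    have := h0 (Fin.castLE hle j)
    dsimp only at this
    rw [sum_mul_phiFE] at this
    refine (mul_eq_zero.mp this).resolve_left (mul_ne_zero (by exact_mod_cast hscale.ne') ?_)
    exact inv_ne_zero (pow_ne_zero _ (Circle.coe_ne_zero _))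
  funext x
  simp [hc]

section LeastSquares

variable {𝕜 E : Type*} [RCLike 𝕜] [NormedAddCommGroup E] [InnerProductSpace 𝕜 E]
  (K : Submodule 𝕜 E) [K.HasOrthogonalProjection]

theorem Submodule.norm_sub_sq_eq_of_mem (u : E) {v : E} (hv : v ∈ K) :
    ‖u - v‖ ^ 2 = ‖u - K.starProjection u‖ ^ 2 + ‖K.starProjection u - v‖ ^ 2 := by
  have h := norm_add_sq_eq_norm_sq_add_norm_sq_of_inner_eq_zero (𝕜 := 𝕜) _ _
    (K.starProjection_inner_eq_zero u _ (K.sub_mem (K.starProjection_apply_mem u) hv))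
  rw [sub_add_sub_cancel] at h
  simpa only [sq] using h

theorem Submodule.forall_norm_sub_le_iff_starProjection_eq {u v : E} (hv : v ∈ K) :
    (∀ w ∈ K, ‖u - v‖ ≤ ‖u - w‖) ↔ K.starProjection u = v := by
  constructor
  · intro h
    have hle := pow_le_pow_left₀ (norm_nonneg _) (h _ (K.starProjection_apply_mem u)) 2
    rw [K.norm_sub_sq_eq_of_mem u hv] at hle
    rw [← sub_eq_zero, ← norm_eq_zero]
    nlinarith [norm_nonneg (K.starProjection u - v)]
  · rintro rfl w hw
    refine le_of_pow_le_pow_left₀ two_ne_zero (norm_nonneg _) ?_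
    rw [K.norm_sub_sq_eq_of_mem u hw]
    exact le_add_of_nonneg_right (sq_nonneg _)

end LeastSquares

noncomputable def nodeEval (M : ℕ) : (ℝ → ℂ) →ₗ[ℂ] EuclideanSpace ℂ (Fin (2 * M + 1)) :=
  (WithLp.linearEquiv 2 ℂ (Fin (2 * M + 1) → ℂ)).symm.toLinearMap ∘ₗ
    LinearMap.pi fun k => LinearMap.proj (equiNode M k)

@[simp]
theorem nodeEval_apply (M : ℕ) (g : ℝ → ℂ) (k : Fin (2 * M + 1)) :
    nodeEval M g k = g (equiNode M k) := rfl

theorem norm_nodeEval_sq (M : ℕ) (g : ℝ → ℂ) :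
    ‖nodeEval M g‖ ^ 2 = ∑ k, ‖g (equiNode M k)‖ ^ 2 := by
  simp [EuclideanSpace.norm_sq_eq]

theorem equiNormSq_eq (M : ℕ) (g : ℝ → ℂ) :
    equiNormSq M g = ((M : ℝ) + 1 / 2)⁻¹ * ‖nodeEval M g‖ ^ 2 := by
  rw [equiNormSq, norm_nodeEval_sq]

theorem eq_zero_of_nodeEval_eq_zero {T : ℝ} (hT : 1 < T) {N M : ℕ} (hNM : N ≤ M)
    {φ : ℝ → ℂ} (hφ : φ ∈ fourierSpace T N) (h0 : nodeEval M φ = 0) : φ = 0 :=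
  eq_zero_of_forall_equiNode_eq_zero hT hNM hφ fun k => by
    simpa using congrArg (· k) h0

theorem isEquiFE_iff {T : ℝ} {N M : ℕ} {f φ : ℝ → ℂ} :
    IsEquiFE T N M f φ ↔ φ ∈ fourierSpace T N ∧
      ((fourierSpace T N).map (nodeEval M)).starProjection (nodeEval M f) = nodeEval M φ := by
  have hsum : ∀ ψ : ℝ → ℂ, ∑ k, ‖f (equiNode M k) - ψ (equiNode M k)‖ ^ 2 =
      ‖nodeEval M f - nodeEval M ψ‖ ^ 2 := fun ψ => by
    rw [← map_sub, norm_nodeEval_sq]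
    rfl
  simp only [IsEquiFE, memGN_iff_mem_fourierSpace, hsum]
  refine and_congr_right fun hφ => ?_
  rw [← Submodule.forall_norm_sub_le_iff_starProjection_eq _ (Submodule.mem_map_of_mem hφ)]
  simp only [Submodule.mem_map, forall_exists_index, and_imp, forall_apply_eq_imp_iff₂]
  exact forall₂_congr fun ψ _ => pow_le_pow_iff_left₀ (norm_nonneg _) (norm_nonneg _) two_ne_zero

theorem existsUnique_isEquiFE {T : ℝ} (hT : 1 < T) {N M : ℕ} (hNM : N ≤ M) (f : ℝ → ℂ) :
    ∃! φ, IsEquiFE T N M f φ := by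
  obtain ⟨φ, hφ, hφf⟩ := Submodule.mem_map.mp
    (((fourierSpace T N).map (nodeEval M)).starProjection_apply_mem (nodeEval M f))
  refine ⟨φ, isEquiFE_iff.mpr ⟨hφ, hφf.symm⟩, fun χ hχ => ?_⟩
  obtain ⟨hχ, hχf⟩ := isEquiFE_iff.mp hχ
  refine sub_eq_zero.mp (eq_zero_of_nodeEval_eq_zero hT hNM (sub_mem hχ hφ) ?_)
  rw [map_sub, ← hχf, hφf, sub_self]

theorem equiNormSq_sub_le_of_isEquiFE {T : ℝ} {N M : ℕ} {f φ ψ : ℝ → ℂ}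
    (hfφ : IsEquiFE T N M f φ) (hψ : ψ ∈ fourierSpace T N) :
    equiNormSq M (φ - ψ) ≤ equiNormSq M (f - ψ) := by
  set K := (fourierSpace T N).map (nodeEval M)
  obtain ⟨-, hφf⟩ := isEquiFE_iff.mp hfφ
  have hψK : K.starProjection (nodeEval M ψ) = nodeEval M ψ :=
    K.starProjection_eq_self_iff.mpr (Submodule.mem_map_of_mem hψ)
  have hproj : nodeEval M (φ - ψ) = K.starProjection (nodeEval M (f - ψ)) := by
    rw [map_sub, map_sub, map_sub, hφf, hψK]
  rw [equiNormSq_eq, equiNormSq_eq, hproj]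
  gcongr
  exact K.norm_starProjection_apply_le _

theorem isEquiFE_self {T : ℝ} {N M : ℕ} {φ : ℝ → ℂ} (hφ : memGN T N φ) : IsEquiFE T N M φ φ :=
  ⟨hφ, fun _ _ => by simpa using Finset.sum_nonneg fun _ _ => sq_nonneg _⟩

noncomputable def l2Norm (g : ℝ → ℂ) : ℝ := √(∫ x in Ioo (-1 : ℝ) 1, ‖g x‖ ^ 2)

def unitDiscreteL2Norms (T : ℝ) (N M : ℕ) : Set ℝ :=
  {r | ∃ φ : ℝ → ℂ, memGN T N φ ∧ equiNormSq M φ = 1 ∧ r = l2Norm φ}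

theorem l2Norm_smul (c : ℂ) (g : ℝ → ℂ) : l2Norm (c • g) = ‖c‖ * l2Norm g := by
  simp only [l2Norm, Pi.smul_apply, smul_eq_mul, norm_mul, mul_pow, integral_const_mul]
  rw [Real.sqrt_mul (by positivity), Real.sqrt_sq (norm_nonneg _)]

theorem equiNormSq_smul (M : ℕ) (c : ℂ) (g : ℝ → ℂ) :
    equiNormSq M (c • g) = ‖c‖ ^ 2 * equiNormSq M g := by
  rw [equiNormSq_eq, equiNormSq_eq, map_smul, norm_smul]
  ring

theorem equiNormSq_nonneg (M : ℕ) (g : ℝ → ℂ) : 0 ≤ equiNormSq M g := by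
  rw [equiNormSq]
  positivity

theorem equiNormSq_eq_zero_iff {M : ℕ} {g : ℝ → ℂ} : equiNormSq M g = 0 ↔ nodeEval M g = 0 := by
  rw [equiNormSq_eq, mul_eq_zero, or_iff_right (by positivity), sq_eq_zero_iff, norm_eq_zero]

theorem l2Norm_le_mul_sqrt_equiNormSq {T : ℝ} (hT : 1 < T) {N M : ℕ} (hNM : N ≤ M) {D : ℝ}
    (hD : D ∈ upperBounds (unitDiscreteL2Norms T N M)) (hD0 : 0 ≤ D) {φ : ℝ → ℂ}
    (hφ : φ ∈ fourierSpace T N) : l2Norm φ ≤ D * √(equiNormSq M φ) := by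
  set s := √(equiNormSq M φ)
  rcases (Real.sqrt_nonneg (equiNormSq M φ)).eq_or_lt with hs | hs
  · have hzero : equiNormSq M φ = 0 :=
      le_antisymm (Real.sqrt_eq_zero'.mp hs.symm) (equiNormSq_nonneg M φ)
    rw [eq_zero_of_nodeEval_eq_zero hT hNM hφ (equiNormSq_eq_zero_iff.mp hzero)]
    simpa [l2Norm] using mul_nonneg hD0 (Real.sqrt_nonneg _)
  have hunit : equiNormSq M (((s⁻¹ : ℝ) : ℂ) • φ) = 1 := by
    rw [equiNormSq_smul, Complex.norm_real, Real.norm_of_nonneg (inv_nonneg.mpr hs.le), inv_pow,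
      Real.sq_sqrt (equiNormSq_nonneg M φ), inv_mul_cancel₀ (Real.sqrt_pos.mp hs).ne']
  have hle := hD ⟨_, memGN_iff_mem_fourierSpace.mpr (Submodule.smul_mem _ _ hφ), hunit, rfl⟩
  rw [l2Norm_smul, Complex.norm_real, Real.norm_of_nonneg (inv_nonneg.mpr hs.le),
    inv_mul_le_iff₀ hs] at hle
  linarith

theorem one_le_of_mem_upperBounds {T : ℝ} (hT : 0 < T) {N M : ℕ} {D : ℝ}
    (hD : D ∈ upperBounds (unitDiscreteL2Norms T N M)) : 1 ≤ D := by
  -- The constant function `√T φ₀ = 1/√2` has both norms equal to `1`.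
  set φ : ℝ → ℂ := ((√T : ℝ) : ℂ) • phiFE T 0
  have hφ : ∀ x, ‖φ x‖ ^ 2 = 1 / 2 := fun x => by
    rw [show φ x = (√T : ℂ) * phiFE T 0 x from rfl, norm_mul, norm_phiFE, Complex.norm_real,
      Real.norm_of_nonneg (by positivity), mul_pow, div_pow, Real.sq_sqrt hT.le,
      Real.sq_sqrt (by positivity)]
    field_simp
  have hmem : memGN T N φ := memGN_iff_mem_fourierSpace.mpr <|
    Submodule.smul_mem _ _ (Submodule.subset_span ⟨⟨N, by omega⟩, by simp [frame]⟩)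
  have hunit : equiNormSq M φ = 1 := by
    simp only [equiNormSq, hφ, Finset.sum_const, Finset.card_univ, Fintype.card_fin, nsmul_eq_mul]
    push_cast
    field_simp
  have hl2 : l2Norm φ = 1 := by
    simp [l2Norm, hφ]
    norm_num
  simpa [hl2] using hD ⟨φ, hmem, hunit, rfl⟩

theorem add_sq_le_weighted_sum_sq (a b : ℝ) {t : ℝ} (ht : 0 < t) :
    (a + b) ^ 2 ≤ (1 + t) * a ^ 2 + (1 + t⁻¹) * b ^ 2 := by
  have h : (1 + t) * a ^ 2 + (1 + t⁻¹) * b ^ 2 - (a + b) ^ 2 = t⁻¹ * (t * a - b) ^ 2 := by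
    field_simp
    ring
  nlinarith [mul_nonneg (inv_nonneg.mpr ht.le) (sq_nonneg (t * a - b))]

theorem le_biSup_of_bddAbove_image {α : Type*} {g : α → ℝ} {s : Set α} (hg : BddAbove (g '' s))
    {x : α} (hx : x ∈ s) : g x ≤ ⨆ y ∈ s, g y := by
  refine le_ciSup₂ (f := fun y (_ : y ∈ s) => g y) ?_ x hx
  obtain ⟨B, hB⟩ := hg
  refine ⟨B, ?_⟩
  rintro _ ⟨_, ⟨y, rfl⟩, ⟨hy, rfl⟩⟩
  exact hB (mem_image_of_mem g hy)

theorem norm_sub_le_biSup {f ψ : ℝ → ℂ} (hf : BddOn11 f) (hψ : Continuous ψ) :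
    ∀ x ∈ Icc (-1 : ℝ) 1, ‖f x - ψ x‖ ≤ ⨆ y ∈ Icc (-1 : ℝ) 1, ‖f y - ψ y‖ := by
  intro x hx
  obtain ⟨Bf, hBf⟩ := hf
  obtain ⟨Bψ, hBψ⟩ := isCompact_Icc.exists_bound_of_continuousOn hψ.continuousOn
  refine le_biSup_of_bddAbove_image (g := fun y => ‖f y - ψ y‖) ⟨Bf + Bψ, ?_⟩ hx
  rintro _ ⟨y, hy, rfl⟩
  exact (norm_sub_le _ _).trans (add_le_add (hBf y hy) (hBψ y hy))

theorem sqrt_equiNormSq_le {M : ℕ} {g : ℝ → ℂ} {S : ℝ}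
    (hg : ∀ x ∈ Icc (-1 : ℝ) 1, ‖g x‖ ≤ S) : √(equiNormSq M g) ≤ √2 * S := by
  have hS0 : 0 ≤ S := (norm_nonneg _).trans (hg 0 ⟨by norm_num, by norm_num⟩)
  have hsum : ∑ k, ‖g (equiNode M k)‖ ^ 2 ≤ ∑ _k : Fin (2 * M + 1), S ^ 2 :=
    Finset.sum_le_sum fun k _ => pow_le_pow_left₀ (norm_nonneg _) (hg _ (equiNode_mem_Icc M k)) 2
  simp only [Finset.sum_const, Finset.card_univ, Fintype.card_fin, nsmul_eq_mul] at hsum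
  rw [← Real.sqrt_sq hS0, ← Real.sqrt_mul zero_le_two, equiNormSq]
  refine Real.sqrt_le_sqrt ?_
  rw [inv_mul_le_iff₀ (by positivity)]
  push_cast at hsum
  linarith

theorem l2Norm_sub_le {f φ ψ : ℝ → ℂ} {S D : ℝ} (hD : 0 < D)
    (hS : ∀ x ∈ Icc (-1 : ℝ) 1, ‖f x - ψ x‖ ≤ S) (hφ : Continuous φ) (hψ : Continuous ψ)
    (hφψ : l2Norm (φ - ψ) ≤ D * (√2 * S)) : l2Norm (f - φ) ≤ √2 * (1 + D) * S := by
  have hS0 : 0 ≤ S := (norm_nonneg _).trans (hS 0 ⟨by norm_num, by norm_num⟩)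
  simp only [l2Norm, Pi.sub_apply, Real.sqrt_le_left (by positivity : 0 ≤ D * (√2 * S)),
    Real.sqrt_le_iff] at hφψ ⊢
  refine ⟨by positivity, ?_⟩
  by_cases hint : IntegrableOn (fun x => ‖f x - φ x‖ ^ 2) (Ioo (-1 : ℝ) 1)
  swap
  · rw [integral_undef hint]
    positivity
  -- Weighted pointwise splitting avoids any measurability assumption on `f`.
  have hpt : ∀ x ∈ Ioo (-1 : ℝ) 1,
      ‖f x - φ x‖ ^ 2 ≤ (1 + D) * S ^ 2 + (1 + D⁻¹) * ‖φ x - ψ x‖ ^ 2 := fun x hx => by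
    have htri : ‖f x - φ x‖ ≤ ‖f x - ψ x‖ + ‖φ x - ψ x‖ := by
      rw [norm_sub_rev (φ x)]
      exact norm_sub_le_norm_sub_add_norm_sub _ _ _
    have hSx := pow_le_pow_left₀ (norm_nonneg _) (hS x (Ioo_subset_Icc_self hx)) 2
    nlinarith [pow_le_pow_left₀ (norm_nonneg _) htri 2,
      add_sq_le_weighted_sum_sq ‖f x - ψ x‖ ‖φ x - ψ x‖ hD]
  have hconst : IntegrableOn (fun _ => (1 + D) * S ^ 2) (Ioo (-1 : ℝ) 1) :=
    integrableOn_const (by simp)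
  have hcont : IntegrableOn (fun x => ‖φ x - ψ x‖ ^ 2) (Ioo (-1 : ℝ) 1) :=
    (Continuous.integrableOn_Icc (by fun_prop)).mono_set Ioo_subset_Icc_self
  calc ∫ x in Ioo (-1 : ℝ) 1, ‖f x - φ x‖ ^ 2
      ≤ ∫ x in Ioo (-1 : ℝ) 1, ((1 + D) * S ^ 2 + (1 + D⁻¹) * ‖φ x - ψ x‖ ^ 2) :=
        setIntegral_mono_on hint (hconst.add (hcont.const_mul _)) measurableSet_Ioo hpt
    _ = 2 * ((1 + D) * S ^ 2) + (1 + D⁻¹) * ∫ x in Ioo (-1 : ℝ) 1, ‖φ x - ψ x‖ ^ 2 := by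
        rw [integral_add hconst (hcont.const_mul _), setIntegral_const, integral_const_mul,
          Real.volume_real_Ioo_of_le (by norm_num), smul_eq_mul]
        norm_num
    _ ≤ 2 * ((1 + D) * S ^ 2) + (1 + D⁻¹) * (D * (√2 * S)) ^ 2 := by gcongr
    _ = (√2 * (1 + D) * S) ^ 2 := by
        have h2 : √2 ^ 2 = 2 := Real.sq_sqrt zero_le_two
        field_simp
        linear_combination (-(S ^ 2 * D + S ^ 2)) * h2

theorem stmt_14_general (T : ℝ) (hT : 1 < T) (N M : ℕ) (hNM : N ≤ M) (D : ℝ)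
    (hD : IsLUB { r : ℝ | ∃ φ : ℝ → ℂ, memGN T N φ ∧ equiNormSq M φ = 1 ∧
      r = Real.sqrt (∫ x in Set.Ioo (-1 : ℝ) 1, ‖φ x‖ ^ 2) } D) :
    -- (i) existence and uniqueness of the minimizer
    (∀ f : ℝ → ℂ, BddOn11 f → ∃! φ : ℝ → ℂ, IsEquiFE T N M f φ) ∧
    (∀ φ : ℝ → ℂ, memGN T N φ → (∀ k : Fin (2 * M + 1), φ (equiNode M k) = 0) →
      ∀ x : ℝ, φ x = 0) ∧
    -- (ii) error bound
    (∀ f φ : ℝ → ℂ, BddOn11 f → IsEquiFE T N M f φ →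
      ∀ ψ : ℝ → ℂ, memGN T N ψ →
        Real.sqrt (∫ x in Set.Ioo (-1 : ℝ) 1, ‖f x - φ x‖ ^ 2)
          ≤ Real.sqrt 2 * (1 + D) * (⨆ x ∈ Set.Icc (-1 : ℝ) 1, ‖f x - ψ x‖)) ∧
    -- (iii) condition number
    IsLUB { r : ℝ | ∃ f φ : ℝ → ℂ, BddOn11 f ∧ IsEquiFE T N M f φ ∧ equiNormSq M f = 1 ∧
      r = Real.sqrt (∫ x in Set.Ioo (-1 : ℝ) 1, ‖φ x‖ ^ 2) } D := by
  obtain ⟨hub, hlub⟩ : IsLUB (unitDiscreteL2Norms T N M) D := hD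
  have hD1 : 1 ≤ D := one_le_of_mem_upperBounds (by linarith) hub
  have hbound : ∀ φ ∈ fourierSpace T N, l2Norm φ ≤ D * √(equiNormSq M φ) :=
    fun _ => l2Norm_le_mul_sqrt_equiNormSq hT hNM hub (by linarith)
  refine ⟨fun f _ => existsUnique_isEquiFE hT hNM f, fun φ hφ h0 => ?_, ?_, ?_, ?_⟩
  · exact congrFun (eq_zero_of_forall_equiNode_eq_zero hT hNM
      (memGN_iff_mem_fourierSpace.mp hφ) h0)
  · intro f φ hf hfφ ψ hψ
    rw [memGN_iff_mem_fourierSpace] at hψ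
    have hφ := memGN_iff_mem_fourierSpace.mp hfφ.1
    have hS := norm_sub_le_biSup hf (continuous_of_mem_fourierSpace hψ)
    refine l2Norm_sub_le (by linarith) hS (continuous_of_mem_fourierSpace hφ)
      (continuous_of_mem_fourierSpace hψ) ((hbound _ (sub_mem hφ hψ)).trans ?_)
    gcongr
    exact (Real.sqrt_le_sqrt (equiNormSq_sub_le_of_isEquiFE hfφ hψ)).trans (sqrt_equiNormSq_le hS)
  · rintro _ ⟨f, φ, -, hfφ, hf1, rfl⟩
    have hφf := equiNormSq_sub_le_of_isEquiFE hfφ (zero_mem (fourierSpace T N))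
    rw [sub_zero, sub_zero, hf1] at hφf
    calc l2Norm φ ≤ D * √(equiNormSq M φ) := hbound _ (memGN_iff_mem_fourierSpace.mp hfφ.1)
      _ ≤ D := mul_le_of_le_one_right (by linarith) (Real.sqrt_le_one.mpr hφf)
  · refine fun b hb => hlub ?_
    rintro _ ⟨φ, hφ, hφ1, rfl⟩
    exact hb ⟨φ, φ, (isCompact_Icc.exists_bound_of_continuousOn
        (continuous_of_mem_fourierSpace (memGN_iff_mem_fourierSpace.mp hφ)).continuousOn),
      isEquiFE_self hφ, hφ1, rfl⟩

/-- For `1 ≤ N ≤ M` and `D(N,M) = sup{‖φ‖ : φ ∈ 𝒢_N, ‖φ‖_M = 1}`: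
(i) every bounded `f` has a unique equispaced FE `F_{N,M}(f)`, and the only `φ ∈ 𝒢_N`
vanishing at all equispaced nodes is `0`;
(ii) `‖f − F_{N,M}(f)‖ ≤ √2 (1 + D(N,M)) inf_{ψ ∈ 𝒢_N} ‖f − ψ‖_∞`;
(iii) the condition number of `F_{N,M}` equals `D(N,M)`. -/
theorem stmt_14 (T : ℝ) (hT : 1 < T) (N M : ℕ) (hN : 1 ≤ N) (hNM : N ≤ M) (D : ℝ)
    (hD : IsLUB { r : ℝ | ∃ φ : ℝ → ℂ, memGN T N φ ∧ equiNormSq M φ = 1 ∧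
      r = Real.sqrt (∫ x in Set.Ioo (-1 : ℝ) 1, ‖φ x‖ ^ 2) } D) :
    -- (i) existence and uniqueness of the minimizer
    (∀ f : ℝ → ℂ, BddOn11 f → ∃! φ : ℝ → ℂ, IsEquiFE T N M f φ) ∧
    (∀ φ : ℝ → ℂ, memGN T N φ → (∀ k : Fin (2 * M + 1), φ (equiNode M k) = 0) →
      ∀ x : ℝ, φ x = 0) ∧
    -- (ii) error bound
    (∀ f φ : ℝ → ℂ, BddOn11 f → IsEquiFE T N M f φ →
      ∀ ψ : ℝ → ℂ, memGN T N ψ →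
        Real.sqrt (∫ x in Set.Ioo (-1 : ℝ) 1, ‖f x - φ x‖ ^ 2)
          ≤ Real.sqrt 2 * (1 + D) * (⨆ x ∈ Set.Icc (-1 : ℝ) 1, ‖f x - ψ x‖)) ∧
    -- (iii) condition number
    IsLUB { r : ℝ | ∃ f φ : ℝ → ℂ, BddOn11 f ∧ IsEquiFE T N M f φ ∧ equiNormSq M f = 1 ∧
      r = Real.sqrt (∫ x in Set.Ioo (-1 : ℝ) 1, ‖φ x‖ ^ 2) } D :=
  stmt_14_general T hT N M hNM D hD
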